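/- arXiv:2401.02815 — 2 statements merged into one kernel-verified Lean document; each statement's English description precedes it below -/
import Mathlib

section
/- Let (X_n)_{n∈ℕ} be i.i.d. real random variables with common cumulative distribution function F_X, and let (Y_n) be real random variables on the same probability space with Y_n → 0 almost surely as n → ∞. Then for every point of continuity υ of F_X, (1/n) Σ_{ℓ=1}^n 1{X_ℓ + Y_n ≤ υ} → F_X(υ) almost surely as n → ∞. -/
open MeasureTheory ProbabilityTheory Filter Topology

/-!
Writing `X_ℓ + Y_n ≤ υ` as `X_ℓ ≤ υ - Y_n`, the perturbed average is the empirical c.d.f. of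
`X_0, …, X_{n-1}` evaluated at the moving point `υ - Y_n → υ`. By the strong law of large numbers,
almost surely the empirical c.d.f. converges to `F` at every rational point simultaneously. Since
each empirical c.d.f. is monotone, its value at `υ - Y_n` is eventually squeezed between its values
at rationals `a < υ < b`, which converge to `F a` and `F b`; both are close to `F υ` by continuity.
-/

theorem tendsto_apply_of_monotone_of_tendsto_on_dense {ι α β : Type*} {l : Filter ι}
    [TopologicalSpace α] [LinearOrder α] [OrderTopology α] [DenselyOrdered α]
    [NoMinOrder α] [NoMaxOrder α] [TopologicalSpace β] [LinearOrder β] [OrderTopology β]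
    {G : ι → α → β} {F : α → β} {D : Set α} {t : ι → α} {υ : α}
    (hG : ∀ i, Monotone (G i)) (hD : Dense D)
    (hGF : ∀ s ∈ D, Tendsto (fun i => G i s) l (𝓝 (F s)))
    (hF : ContinuousAt F υ) (ht : Tendsto t l (𝓝 υ)) :
    Tendsto (fun i => G i (t i)) l (𝓝 (F υ)) := by
  refine tendsto_order.2 ⟨fun c hc => ?_, fun c hc => ?_⟩
  · obtain ⟨a, b, ⟨ha, hb⟩, hsub⟩ :=
      mem_nhds_iff_exists_Ioo_subset.1 (hF.eventually (lt_mem_nhds hc))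
    obtain ⟨s, hsD, has, hsυ⟩ := hD.exists_between ha
    filter_upwards [(tendsto_order.1 (hGF s hsD)).1 c (hsub ⟨has, hsυ.trans hb⟩),
      ht.eventually (lt_mem_nhds hsυ)] with i hGs hts
    exact hGs.trans_le (hG i hts.le)
  · obtain ⟨a, b, ⟨ha, hb⟩, hsub⟩ :=
      mem_nhds_iff_exists_Ioo_subset.1 (hF.eventually (gt_mem_nhds hc))
    obtain ⟨s, hsD, hυs, hsb⟩ := hD.exists_between hb
    filter_upwards [(tendsto_order.1 (hGF s hsD)).2 c (hsub ⟨ha.trans hυs, hsb⟩),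
      ht.eventually (gt_mem_nhds hυs)] with i hGs hts
    exact (hG i hts.le).trans_lt hGs

noncomputable def empiricalCDF (x : ℕ → ℝ) (n : ℕ) (t : ℝ) : ℝ :=
  (n : ℝ)⁻¹ * ∑ ℓ ∈ Finset.range n, if x ℓ ≤ t then 1 else 0

theorem monotone_empiricalCDF (x : ℕ → ℝ) (n : ℕ) : Monotone (empiricalCDF x n) := by
  intro s t hst
  unfold empiricalCDF
  gcongr with ℓ
  split_ifs with hs ht <;> first | exact absurd (hs.trans hst) ht | norm_num

theorem ae_tendsto_empiricalCDF {Ω : Type*} [MeasurableSpace Ω] {μ : Measure Ω}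
    [IsFiniteMeasure μ] {X : ℕ → Ω → ℝ} (hindep : Pairwise fun i j => IndepFun (X i) (X j) μ)
    (hident : ∀ i, IdentDistrib (X i) (X 0) μ μ) (t : ℝ) :
    ∀ᵐ ω ∂μ, Tendsto (fun n => empiricalCDF (X · ω) n t) atTop
      (𝓝 (μ.real {ω | X 0 ω ≤ t})) := by
  set g : ℝ → ℝ := (Set.Iic t).indicator 1
  have hg : Measurable g := measurable_one.indicator measurableSet_Iic
  have hX0 : AEMeasurable (X 0) μ := (hident 0).aemeasurable_fst
  have hint : Integrable (fun ω => g (X 0 ω)) μ :=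
    (integrable_const (1 : ℝ)).mono (hg.comp_aemeasurable hX0).aestronglyMeasurable
      (Eventually.of_forall fun _ => norm_indicator_le_norm_self _ _)
  have hmean : ∫ ω, g (X 0 ω) ∂μ = μ.real {ω | X 0 ω ≤ t} := by
    rw [← integral_map hX0 hg.aestronglyMeasurable, integral_indicator_one measurableSet_Iic,
      map_measureReal_apply_of_aemeasurable hX0 measurableSet_Iic]
    rfl
  have hslln := strong_law_ae_real (fun ℓ ω => g (X ℓ ω)) hint
    (fun i j hij => (hindep hij).comp hg hg) (fun i => (hident i).comp hg)
  filter_upwards [hslln] with ω hω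
  rw [← hmean]
  convert hω using 2 with n
  simp only [empiricalCDF, div_eq_inv_mul, g, Set.indicator_apply, Set.mem_Iic, Pi.one_apply]

/-- let `(X_n)` be i.i.d. real random variables with common c.d.f.
`F`, and let `Y_n → 0` a.s. Then for every continuity point `υ` of `F`, the perturbed
empirical c.d.f. `(1/n) Σ_{ℓ<n} 1{X_ℓ + Y_n ≤ υ}` converges a.s. to `F(υ)`. -/
theorem perturbed_ecdf_tendsto_ae
    {Ω : Type*} [MeasurableSpace Ω] (μ : Measure Ω) [IsProbabilityMeasure μ]
    (X : ℕ → Ω → ℝ) (hXmeas : ∀ n, Measurable (X n))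
    (hXindep : iIndepFun X μ)
    (hXident : ∀ n, μ.map (X n) = μ.map (X 0))
    (F : ℝ → ℝ) (hF : ∀ t, F t = (μ {ω | X 0 ω ≤ t}).toReal)
    (Y : ℕ → Ω → ℝ)
    (hY : ∀ᵐ ω ∂μ, Tendsto (fun n => Y n ω) atTop (nhds 0))
    (υ : ℝ) (hυ : ContinuousAt F υ) :
    ∀ᵐ ω ∂μ,
      Tendsto
        (fun n : ℕ => ((n : ℝ))⁻¹ *
          ∑ ℓ ∈ Finset.range n, if X ℓ ω + Y n ω ≤ υ then (1 : ℝ) else 0)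
        atTop (nhds (F υ)) := by
  have hecdf : ∀ᵐ ω ∂μ, ∀ q : ℚ,
      Tendsto (fun n => empiricalCDF (X · ω) n q) atTop (𝓝 (F q)) := by
    refine ae_all_iff.2 fun q => ?_
    simp only [hF]
    exact ae_tendsto_empiricalCDF (fun i j hij => hXindep.indepFun hij)
      (fun i => ⟨(hXmeas i).aemeasurable, (hXmeas 0).aemeasurable, hXident i⟩) q
  filter_upwards [hecdf, hY] with ω hω hYω
  simp_rw [← le_sub_iff_add_le]
  exact tendsto_apply_of_monotone_of_tendsto_on_dense (G := empiricalCDF (X · ω))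
    (monotone_empiricalCDF (X · ω))
    Rat.denseRange_cast (Set.forall_mem_range.2 hω) hυ
    (by simpa using tendsto_const_nhds.sub hYω)
end

section
/- Let p ∈ ℕ, let P be an invertible p×p real matrix, let A be a p×p diagonal matrix with strictly positive diagonal entries, and let W be a p×p real symmetric positive semidefinite matrix. Then for every ℓ = 1,…,p: λ_ℓ(A²) · λ_1(W) · σ_1(P)² ≤ λ_ℓ(P A W A Pᵀ) ≤ λ_ℓ(A²) · λ_p(W) · σ_p(P)². -/
open Matrix

/-- The eigenvalues of a real symmetric (Hermitian) matrix, listed in nondecreasing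
order. (Junk value `0` if the matrix is not Hermitian.) -/
noncomputable def sortedEigs {n : ℕ} (A : Matrix (Fin n) (Fin n) ℝ) : Fin n → ℝ :=
  if hA : A.IsHermitian then hA.eigenvalues ∘ Tuple.sort hA.eigenvalues else 0

/-- `eigLE A k` is the `(k+1)`-th smallest eigenvalue `λ_{k+1}(A)` of the real
symmetric matrix `A` (with junk value `0` when `k ≥ n`). -/
noncomputable def eigLE {n : ℕ} (A : Matrix (Fin n) (Fin n) ℝ) (k : ℕ) : ℝ :=
  if h : k < n then sortedEigs A ⟨k, h⟩ else 0

/-- `svLE P k` is the `(k+1)`-th smallest singular value `σ_{k+1}(P)` of the real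
square matrix `P`, i.e. the square root of the `(k+1)`-th smallest eigenvalue of
`PᵀP`. -/
noncomputable def svLE {n : ℕ} (P : Matrix (Fin n) (Fin n) ℝ) (k : ℕ) : ℝ :=
  Real.sqrt (eigLE (Pᵀ * P) k)

/-!
Write `D = diagonal d` and `N = P * D`, so that the matrix in question is `N * W * Nᴴ`. Since
`λ_1(W) • 1 ≤ W ≤ λ_p(W) • 1` in the Loewner order and conjugation by `N` preserves that order,
Weyl's monotonicity theorem (eigenvalues are monotone in the Loewner order, by a Courant–Fischer
dimension count) squeezes `λ_ℓ(N W Nᴴ)` between `λ_1(W) λ_ℓ(N Nᴴ)` and `λ_p(W) λ_ℓ(N Nᴴ)`.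
Now `N Nᴴ` has the same characteristic polynomial as `Nᴴ N = D (PᵀP) D`, and the same squeeze
with `PᵀP` in place of `W` and `D` in place of `N` bounds `λ_ℓ(D (PᵀP) D)` by
`σ_1(P)² λ_ℓ(D²)` and `σ_p(P)² λ_ℓ(D²)`.
-/

open Polynomial
open scoped MatrixOrder

theorem Monotone.eq_of_map_univ_eq {α : Type*} [LinearOrder α] {n : ℕ} {f g : Fin n → α}
    (hf : Monotone f) (hg : Monotone g)
    (h : Finset.univ.val.map f = Finset.univ.val.map g) : f = g := by
  rw [Fin.univ_val_map, Fin.univ_val_map, Multiset.coe_eq_coe] at h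
  exact List.ofFn_injective <| h.eq_of_pairwise' (List.sortedLE_ofFn_iff.mpr hf).pairwise
    (List.sortedLE_ofFn_iff.mpr hg).pairwise

theorem Polynomial.roots_prod_univ_X_sub_C {R : Type*} [CommRing R] [IsDomain R] {ι : Type*}
    [Fintype ι] (f : ι → R) : (∏ i, (X - C (f i))).roots = Finset.univ.val.map f := by
  have := roots_multiset_prod_X_sub_C (Finset.univ.val.map f)
  rwa [Multiset.map_map] at this

section SortedEigs

variable {n : ℕ} {M N : Matrix (Fin n) (Fin n) ℝ}

theorem sortedEigs_of_isHermitian (hM : M.IsHermitian) :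
    sortedEigs M = hM.eigenvalues ∘ Tuple.sort hM.eigenvalues :=
  dif_pos hM

theorem monotone_sortedEigs (hM : M.IsHermitian) : Monotone (sortedEigs M) :=
  sortedEigs_of_isHermitian hM ▸ Tuple.monotone_sort _

theorem Matrix.IsHermitian.eigenvalues_eq_sortedEigs (hM : M.IsHermitian) (i : Fin n) :
    hM.eigenvalues i = sortedEigs M ((Tuple.sort hM.eigenvalues).symm i) := by
  simp [sortedEigs_of_isHermitian hM]

theorem sortedEigs_eq_of_charpoly_eq_prod (hM : M.IsHermitian) {f : Fin n → ℝ}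
    (hf : Monotone f) (h : M.charpoly = ∏ i, (X - C (f i))) : sortedEigs M = f := by
  refine (monotone_sortedEigs hM).eq_of_map_univ_eq hf ?_
  have hroots := congrArg Polynomial.roots (hM.charpoly_eq.symm.trans h)
  rw [roots_prod_univ_X_sub_C, roots_prod_univ_X_sub_C] at hroots
  rw [sortedEigs_of_isHermitian hM, ← Multiset.map_map, Multiset.map_univ_val_equiv]
  simpa using hroots

theorem sortedEigs_eq_of_charpoly_eq (hM : M.IsHermitian) (hN : N.IsHermitian)
    (h : M.charpoly = N.charpoly) : sortedEigs M = sortedEigs N := by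
  rw [sortedEigs_of_isHermitian hM, sortedEigs_of_isHermitian hN,
    (hM.eigenvalues_eq_eigenvalues_iff hN).mpr h]

theorem sortedEigs_smul (hM : M.IsHermitian) {c : ℝ} (hc : 0 ≤ c) :
    sortedEigs (c • M) = c • sortedEigs M := by
  refine sortedEigs_eq_of_charpoly_eq_prod (hM.smul (IsSelfAdjoint.all c))
    ((monotone_sortedEigs hM).const_smul hc) ?_
  rw [← cfc_const_mul_id c M, hM.charpoly_cfc_eq, sortedEigs_of_isHermitian hM,
    ← Equiv.prod_comp (Tuple.sort hM.eigenvalues)]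
  rfl

end SortedEigs

section Rayleigh

variable {ι : Type*} [Fintype ι] [DecidableEq ι]

theorem Matrix.dotProduct_self_star_mulVec_of_mem_unitaryGroup {U : Matrix ι ι ℝ}
    (hU : U ∈ unitaryGroup ι ℝ) (x : ι → ℝ) : (star U *ᵥ x) ⬝ᵥ (star U *ᵥ x) = x ⬝ᵥ x := by
  rw [dotProduct_mulVec, ← mulVec_transpose, star_eq_conjTranspose,
    conjTranspose_eq_transpose_of_trivial, transpose_transpose, mulVec_mulVec,
    ← conjTranspose_eq_transpose_of_trivial, ← star_eq_conjTranspose, mem_unitaryGroup_iff.mp hU,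
    one_mulVec]

theorem Matrix.IsHermitian.dotProduct_mulVec_eq_sum {M : Matrix ι ι ℝ} (hM : M.IsHermitian)
    (x : ι → ℝ) :
    x ⬝ᵥ (M *ᵥ x) =
      ∑ i, hM.eigenvalues i * (star (hM.eigenvectorUnitary : Matrix ι ι ℝ) *ᵥ x) i ^ 2 := by
  conv_lhs => rw [hM.spectral_theorem]
  simp only [Unitary.conjStarAlgAut_apply, RCLike.ofReal_real_eq_id, Function.id_comp,
    ← mulVec_mulVec, dotProduct_mulVec _ (hM.eigenvectorUnitary : Matrix ι ι ℝ)]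
  rw [← mulVec_transpose, ← conjTranspose_eq_transpose_of_trivial, ← star_eq_conjTranspose,
    dotProduct]
  exact Finset.sum_congr rfl fun i _ => by rw [mulVec_diagonal]; ring

theorem Matrix.IsHermitian.mul_dotProduct_self_le {M : Matrix ι ι ℝ} (hM : M.IsHermitian)
    {c : ℝ} {x : ι → ℝ}
    (h : ∀ i, (star (hM.eigenvectorUnitary : Matrix ι ι ℝ) *ᵥ x) i ≠ 0 → c ≤ hM.eigenvalues i) :
    c * (x ⬝ᵥ x) ≤ x ⬝ᵥ (M *ᵥ x) := by
  rw [hM.dotProduct_mulVec_eq_sum, ← dotProduct_self_star_mulVec_of_mem_unitaryGroup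
    hM.eigenvectorUnitary.2, dotProduct, Finset.mul_sum]
  refine Finset.sum_le_sum fun i _ => ?_
  by_cases hi : (star (hM.eigenvectorUnitary : Matrix ι ι ℝ) *ᵥ x) i = 0
  · simp [hi]
  · rw [← sq]
    exact mul_le_mul_of_nonneg_right (h i hi) (sq_nonneg _)

theorem Matrix.IsHermitian.dotProduct_mulVec_le_mul {M : Matrix ι ι ℝ} (hM : M.IsHermitian)
    {c : ℝ} {x : ι → ℝ}
    (h : ∀ i, (star (hM.eigenvectorUnitary : Matrix ι ι ℝ) *ᵥ x) i ≠ 0 → hM.eigenvalues i ≤ c) :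
    x ⬝ᵥ (M *ᵥ x) ≤ c * (x ⬝ᵥ x) := by
  rw [hM.dotProduct_mulVec_eq_sum, ← dotProduct_self_star_mulVec_of_mem_unitaryGroup
    hM.eigenvectorUnitary.2, dotProduct, Finset.mul_sum]
  refine Finset.sum_le_sum fun i _ => ?_
  by_cases hi : (star (hM.eigenvectorUnitary : Matrix ι ι ℝ) *ᵥ x) i = 0
  · simp [hi]
  · rw [← sq]
    exact mul_le_mul_of_nonneg_right (h i hi) (sq_nonneg _)

end Rayleigh

theorem Matrix.exists_ne_zero_mulVec_eq_zero_of_card_lt {K m ι : Type*} [Field K] [Fintype m]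
    [Fintype ι] (R : Matrix m ι K) (h : Fintype.card m < Fintype.card ι) :
    ∃ x ≠ 0, R *ᵥ x = 0 := by
  have hker : LinearMap.ker R.mulVecLin ≠ ⊥ :=
    LinearMap.ker_ne_bot_of_finrank_lt (by simpa using h)
  obtain ⟨x, hx, hx0⟩ := Submodule.exists_mem_ne_zero_of_ne_bot hker
  exact ⟨x, hx0, hx⟩

theorem sortedEigs_le_sortedEigs_of_le {n : ℕ} {A B : Matrix (Fin n) (Fin n) ℝ} (hA : A.IsHermitian)
    (hB : B.IsHermitian) (hAB : A ≤ B) : sortedEigs A ≤ sortedEigs B := by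
  intro ℓ
  set σA := Tuple.sort hA.eigenvalues
  set σB := Tuple.sort hB.eigenvalues
  set UA := (hA.eigenvectorUnitary : Matrix (Fin n) (Fin n) ℝ)
  set UB := (hB.eigenvectorUnitary : Matrix (Fin n) (Fin n) ℝ)
  -- `x` is orthogonal to the eigenvectors of `A` sorted below `ℓ` and to those of `B` above `ℓ`
  let R : Matrix (Finset.Iio ℓ ⊕ Finset.Ioi ℓ) (Fin n) ℝ :=
    Matrix.of (Sum.elim (fun j => star UA (σA j)) (fun j => star UB (σB j)))
  have hcard : Fintype.card (Finset.Iio ℓ ⊕ Finset.Ioi ℓ) < Fintype.card (Fin n) := by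
    simp only [Fintype.card_sum, Fintype.card_coe, Fin.card_Iio, Fin.card_Ioi, Fintype.card_fin]
    omega
  obtain ⟨x, hx0, hRx⟩ := exists_ne_zero_mulVec_eq_zero_of_card_lt R hcard
  have hxA : ∀ i, (star UA *ᵥ x) i ≠ 0 → sortedEigs A ℓ ≤ hA.eigenvalues i := by
    intro i hi
    rw [hA.eigenvalues_eq_sortedEigs]
    refine monotone_sortedEigs hA (not_lt.mp fun hlt => hi ?_)
    simpa [R, mulVec] using congrFun hRx (Sum.inl ⟨σA.symm i, Finset.mem_Iio.mpr hlt⟩)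
  have hxB : ∀ i, (star UB *ᵥ x) i ≠ 0 → hB.eigenvalues i ≤ sortedEigs B ℓ := by
    intro i hi
    rw [hB.eigenvalues_eq_sortedEigs]
    refine monotone_sortedEigs hB (not_lt.mp fun hlt => hi ?_)
    simpa [R, mulVec] using congrFun hRx (Sum.inr ⟨σB.symm i, Finset.mem_Ioi.mpr hlt⟩)
  have hquad : x ⬝ᵥ (A *ᵥ x) ≤ x ⬝ᵥ (B *ᵥ x) := by
    have := (le_iff.mp hAB).dotProduct_mulVec_nonneg x
    rw [star_trivial, sub_mulVec, dotProduct_sub] at this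
    linarith
  have hx : 0 < x ⬝ᵥ x := by simpa using dotProduct_star_self_pos_iff.mpr hx0
  exact le_of_mul_le_mul_right
    ((hA.mul_dotProduct_self_le hxA).trans (hquad.trans (hB.dotProduct_mulVec_le_mul hxB))) hx

section Conjugation

variable {n : ℕ} {M : Matrix (Fin n) (Fin n) ℝ}

theorem eigLE_zero_le_eigenvalues (hM : M.IsHermitian) (i : Fin n) :
    eigLE M 0 ≤ hM.eigenvalues i := by
  rw [eigLE, dif_pos i.pos, hM.eigenvalues_eq_sortedEigs]
  exact monotone_sortedEigs hM (Fin.le_def.mpr (Nat.zero_le _))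

theorem eigenvalues_le_eigLE_sub_one (hM : M.IsHermitian) (i : Fin n) :
    hM.eigenvalues i ≤ eigLE M (n - 1) := by
  rw [eigLE, dif_pos (Nat.sub_one_lt_of_lt i.2), hM.eigenvalues_eq_sortedEigs]
  exact monotone_sortedEigs hM (Fin.le_def.mpr (Nat.le_sub_one_of_lt (Fin.is_lt _)))

theorem eigLE_nonneg (hM : M.PosSemidef) (k : ℕ) : 0 ≤ eigLE M k := by
  unfold eigLE
  split_ifs
  · rw [sortedEigs_of_isHermitian hM.1]
    exact hM.eigenvalues_nonneg _
  · rfl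

theorem eigLE_zero_smul_one_le (hM : M.IsHermitian) : eigLE M 0 • (1 : Matrix _ _ ℝ) ≤ M := by
  rw [← Algebra.algebraMap_eq_smul_one, algebraMap_le_iff_le_spectrum hM.isSelfAdjoint,
    hM.spectrum_real_eq_range_eigenvalues]
  rintro _ ⟨i, rfl⟩
  exact eigLE_zero_le_eigenvalues hM i

theorem le_eigLE_sub_one_smul_one (hM : M.IsHermitian) :
    M ≤ eigLE M (n - 1) • (1 : Matrix _ _ ℝ) := by
  rw [← Algebra.algebraMap_eq_smul_one, le_algebraMap_iff_spectrum_le hM.isSelfAdjoint,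
    hM.spectrum_real_eq_range_eigenvalues]
  rintro _ ⟨i, rfl⟩
  exact eigenvalues_le_eigLE_sub_one hM i

theorem eigLE_zero_smul_sortedEigs_le (hM : M.PosSemidef) (N : Matrix (Fin n) (Fin n) ℝ) :
    eigLE M 0 • sortedEigs (N * Nᴴ) ≤ sortedEigs (N * M * Nᴴ) := by
  rw [← sortedEigs_smul (isHermitian_mul_conjTranspose_self N) (eigLE_nonneg hM 0)]
  refine sortedEigs_le_sortedEigs_of_le ((isHermitian_mul_conjTranspose_self N).smul
    (IsSelfAdjoint.all _)) (isHermitian_mul_mul_conjTranspose N hM.1) ?_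
  simpa only [Matrix.mul_smul, Matrix.mul_one, Matrix.smul_mul, star_eq_conjTranspose] using
    star_right_conjugate_le_conjugate (eigLE_zero_smul_one_le hM.1) N

theorem sortedEigs_le_eigLE_sub_one_smul_sortedEigs (hM : M.PosSemidef)
    (N : Matrix (Fin n) (Fin n) ℝ) :
    sortedEigs (N * M * Nᴴ) ≤ eigLE M (n - 1) • sortedEigs (N * Nᴴ) := by
  rw [← sortedEigs_smul (isHermitian_mul_conjTranspose_self N) (eigLE_nonneg hM _)]
  refine sortedEigs_le_sortedEigs_of_le (isHermitian_mul_mul_conjTranspose N hM.1)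
    ((isHermitian_mul_conjTranspose_self N).smul (IsSelfAdjoint.all _)) ?_
  simpa only [Matrix.mul_smul, Matrix.mul_one, Matrix.smul_mul, star_eq_conjTranspose] using
    star_right_conjugate_le_conjugate (le_eigLE_sub_one_smul_one hM.1) N

end Conjugation

theorem svLE_sq {n : ℕ} (P : Matrix (Fin n) (Fin n) ℝ) (k : ℕ) :
    svLE P k ^ 2 = eigLE (Pᵀ * P) k :=
  Real.sq_sqrt (eigLE_nonneg (posSemidef_conjTranspose_mul_self P) k)

theorem eigenvalue_bounds_conjugated_diagonal_general
    (p : ℕ) (P : Matrix (Fin p) (Fin p) ℝ)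
    (d : Fin p → ℝ)
    (W : Matrix (Fin p) (Fin p) ℝ) (hW : W.PosSemidef) :
    ∀ ℓ : Fin p,
      sortedEigs (Matrix.diagonal d * Matrix.diagonal d) ℓ * eigLE W 0 *
          (svLE P 0) ^ 2 ≤
        sortedEigs (P * Matrix.diagonal d * W * Matrix.diagonal d * Pᵀ) ℓ ∧
      sortedEigs (P * Matrix.diagonal d * W * Matrix.diagonal d * Pᵀ) ℓ ≤
        sortedEigs (Matrix.diagonal d * Matrix.diagonal d) ℓ * eigLE W (p - 1) *
          (svLE P (p - 1)) ^ 2 := by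
  intro ℓ
  set D := diagonal d
  have hD : Dᴴ = D := (isHermitian_diagonal d).eq
  have hPtP : (Pᵀ * P).PosSemidef := posSemidef_conjTranspose_mul_self P
  have hconj : P * D * W * D * Pᵀ = P * D * W * (P * D)ᴴ := by
    rw [conjTranspose_mul, hD, conjTranspose_eq_transpose_of_trivial]
    simp only [Matrix.mul_assoc]
  have hswap : sortedEigs (P * D * (P * D)ᴴ) = sortedEigs (D * (Pᵀ * P) * Dᴴ) := by
    refine sortedEigs_eq_of_charpoly_eq (isHermitian_mul_conjTranspose_self _)
      (isHermitian_mul_mul_conjTranspose D hPtP.1) ?_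
    rw [charpoly_mul_comm, conjTranspose_mul, hD, conjTranspose_eq_transpose_of_trivial]
    simp only [Matrix.mul_assoc]
  have hW_lo := eigLE_zero_smul_sortedEigs_le hW (P * D) ℓ
  have hW_hi := sortedEigs_le_eigLE_sub_one_smul_sortedEigs hW (P * D) ℓ
  have hP_lo := eigLE_zero_smul_sortedEigs_le hPtP D ℓ
  have hP_hi := sortedEigs_le_eigLE_sub_one_smul_sortedEigs hPtP D ℓ
  simp only [Pi.smul_apply, smul_eq_mul, hswap, hD] at hW_lo hW_hi hP_lo hP_hi
  rw [hconj, svLE_sq, svLE_sq]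
  constructor
  · calc sortedEigs (D * D) ℓ * eigLE W 0 * eigLE (Pᵀ * P) 0
        = eigLE W 0 * (eigLE (Pᵀ * P) 0 * sortedEigs (D * D) ℓ) := by ring
      _ ≤ eigLE W 0 * sortedEigs (D * (Pᵀ * P) * D) ℓ :=
        mul_le_mul_of_nonneg_left hP_lo (eigLE_nonneg hW 0)
      _ ≤ _ := hW_lo
  · calc sortedEigs (P * D * W * (P * D)ᴴ) ℓ
        ≤ eigLE W (p - 1) * sortedEigs (D * (Pᵀ * P) * D) ℓ := hW_hi
      _ ≤ eigLE W (p - 1) * (eigLE (Pᵀ * P) (p - 1) * sortedEigs (D * D) ℓ) :=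
        mul_le_mul_of_nonneg_left hP_hi (eigLE_nonneg hW _)
      _ = _ := by ring

/-- for an invertible `P`, a diagonal `A` with strictly positive
diagonal entries, and a symmetric positive semidefinite `W` (all real `p×p`
matrices), for every `ℓ = 1,…,p`:
`λ_ℓ(A²)·λ_1(W)·σ_1(P)² ≤ λ_ℓ(P A W A Pᵀ) ≤ λ_ℓ(A²)·λ_p(W)·σ_p(P)²`. -/
theorem eigenvalue_bounds_conjugated_diagonal
    (p : ℕ) (P : Matrix (Fin p) (Fin p) ℝ) (hP : IsUnit P.det)
    (d : Fin p → ℝ) (hd : ∀ i, 0 < d i)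
    (W : Matrix (Fin p) (Fin p) ℝ) (hW : W.PosSemidef) :
    ∀ ℓ : Fin p,
      sortedEigs (Matrix.diagonal d * Matrix.diagonal d) ℓ * eigLE W 0 *
          (svLE P 0) ^ 2 ≤
        sortedEigs (P * Matrix.diagonal d * W * Matrix.diagonal d * Pᵀ) ℓ ∧
      sortedEigs (P * Matrix.diagonal d * W * Matrix.diagonal d * Pᵀ) ℓ ≤
        sortedEigs (Matrix.diagonal d * Matrix.diagonal d) ℓ * eigLE W (p - 1) *
          (svLE P (p - 1)) ^ 2 :=
  eigenvalue_bounds_conjugated_diagonal_general p P d W hW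
end
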